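/- arXiv:2403.13426 — 2 statements merged into one kernel-verified Lean document; each statement's English description precedes it below -/
import Mathlib

section
/- Let n = 3, let h satisfy hypotheses (H), and let k ≥ 0 be an integer. Then the Steklov spectral gap satisfies σ_(k+1)(g_h) − σ_(k)(g_h) < R(λ_(k+1) − λ_(k))/h(0)², where λ_(k) = k(k+1) and σ_(0)(g_h) = 0. -/
open MeasureTheory Set

/-- Hypotheses (H): `h` is smooth on `[0,R]`, positive on `[0,R)`, `h(R)=0`,
`h'(R) = -1`, and all even-order derivatives of `h` vanish at `R`. -/
def SatisfiesH (R : ℝ) (h : ℝ → ℝ) : Prop :=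
  ContDiffOn ℝ (⊤ : ℕ∞) h (Set.Icc 0 R) ∧
  (∀ r ∈ Set.Ico (0:ℝ) R, 0 < h r) ∧
  h R = 0 ∧
  derivWithin h (Set.Icc 0 R) R = -1 ∧
  ∀ k : ℕ, iteratedDerivWithin (2 * k) h (Set.Icc 0 R) R = 0

/-- The `k`-th distinct eigenvalue `λ_(k) = k (n + k - 2)` of the Laplacian on the
round unit sphere `S^{n-1}`. -/
noncomputable def sphereEig (n k : ℕ) : ℝ := (k : ℝ) * ((n : ℝ) + (k : ℝ) - 2)

/-- The Rayleigh quotient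
`R_λ(a; h) = (∫₀^R ((a')² h^{n-1} + λ a² h^{n-3}))/(a(0)² h(0)^{n-1})`. -/
noncomputable def rayleighQ (R : ℝ) (n : ℕ) (lam : ℝ) (h a : ℝ → ℝ) : ℝ :=
  (∫ r in (0:ℝ)..R,
      (deriv a r) ^ 2 * h r ^ ((n : ℤ) - 1) + lam * (a r) ^ 2 * h r ^ ((n : ℤ) - 3)) /
    ((a 0) ^ 2 * h 0 ^ ((n : ℤ) - 1))

/-- Admissible test functions: Lipschitz on `[0,R]`, vanishing at `R`, nonzero at `0`. -/
def IsAdmissible (R : ℝ) (a : ℝ → ℝ) : Prop :=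
  (∃ K : NNReal, LipschitzOnWith K a (Set.Icc 0 R)) ∧ a R = 0 ∧ a 0 ≠ 0

/-- The `k`-th distinct Steklov eigenvalue of the ball `[0,R] × S^{n-1}` with the
revolution metric `g_h`, characterized variationally. -/
noncomputable def steklov (R : ℝ) (n k : ℕ) (h : ℝ → ℝ) : ℝ :=
  sInf { v : ℝ | ∃ a : ℝ → ℝ, IsAdmissible R a ∧ v = rayleighQ R n (sphereEig n k) h a }

/-- `a` is a minimizer realizing `σ_(k)(g_h)`. -/
def IsMinimizer (R : ℝ) (n k : ℕ) (h a : ℝ → ℝ) : Prop :=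
  IsAdmissible R a ∧ rayleighQ R n (sphereEig n k) h a = steklov R n k h

/-!
For `n = 3` the Rayleigh quotient is `(E(a) + λ A(a)) / (a(0)² h(0)²)` with `E(a) = ∫ a'² h² ≥ 0`
and `A(a) = ∫ a²`, so `R_{λ'} ≤ (λ'/λ) R_λ` for `0 < λ ≤ λ'`, and taking infima
`σ_{λ'} - σ_λ ≤ (λ'/λ - 1) σ_λ`. It then suffices that `σ_λ < λ R / h(0)²`. This is witnessed by
the profile `min (1 - e r / R) ((R - r) / d)`: its slow descent lowers `λ A` by `λ e R / 2` at an
energy cost of order `e²`, and as `h` is Lipschitz with `h(R) = 0`, i.e. `|h r| ≤ K (R - r)`,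
the cut-off on `[R - d, R]` costs only `K² d`. For `λ_(0) = 0` one uses `σ_(0) ≥ 0` instead.
-/

noncomputable def steklovAt (R : ℝ) (n : ℕ) (lam : ℝ) (h : ℝ → ℝ) : ℝ :=
  sInf {v : ℝ | ∃ a : ℝ → ℝ, IsAdmissible R a ∧ v = rayleighQ R n lam h a}

lemma sphereEig_three (k : ℕ) : sphereEig 3 k = k * (k + 1) := by
  unfold sphereEig
  push_cast
  ring

lemma rayleighQ_three (R lam : ℝ) (h a : ℝ → ℝ) :
    rayleighQ R 3 lam h a =
      (∫ r in (0:ℝ)..R, deriv a r ^ 2 * h r ^ 2 + lam * a r ^ 2) / (a 0 ^ 2 * h 0 ^ 2) := by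
  simp only [rayleighQ, show ((3 : ℕ) : ℤ) - 1 = (2 : ℕ) by norm_num,
    show ((3 : ℕ) : ℤ) - 3 = 0 by norm_num, zpow_zero, mul_one, zpow_natCast]

section Rayleigh

variable {R lam : ℝ} {h a : ℝ → ℝ}

lemma rayleighQ_three_nonneg (hR : 0 ≤ R) (hlam : 0 ≤ lam) : 0 ≤ rayleighQ R 3 lam h a := by
  rw [rayleighQ_three]
  exact div_nonneg (intervalIntegral.integral_nonneg hR fun _ _ => by positivity) (by positivity)

lemma steklovAt_three_nonneg (hR : 0 ≤ R) (hlam : 0 ≤ lam) : 0 ≤ steklovAt R 3 lam h :=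
  Real.sInf_nonneg <| by
    rintro _ ⟨a, -, rfl⟩
    exact rayleighQ_three_nonneg hR hlam

lemma steklovAt_three_le_rayleighQ (hR : 0 ≤ R) (hlam : 0 ≤ lam) (ha : IsAdmissible R a) :
    steklovAt R 3 lam h ≤ rayleighQ R 3 lam h a := by
  refine csInf_le ⟨0, ?_⟩ ⟨a, ha, rfl⟩
  rintro _ ⟨b, -, rfl⟩
  exact rayleighQ_three_nonneg hR hlam

lemma isAdmissible_sub (hR : 0 < R) : IsAdmissible R (fun r => R - r) :=
  ⟨⟨1, (IsometryEquiv.subLeft R).isometry.lipschitz.lipschitzOnWith⟩, sub_self R,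
    by simpa using hR.ne'⟩

lemma intervalIntegrable_deriv_sq_mul_sq {K : NNReal} (hR : 0 ≤ R)
    (ha : LipschitzOnWith K a (Icc 0 R)) (hh : ContinuousOn h (Icc 0 R)) :
    IntervalIntegrable (fun r => deriv a r ^ 2 * h r ^ 2) volume 0 R := by
  rw [intervalIntegrable_iff_integrableOn_Ioo_of_le hR]
  refine (((hh.pow 2).integrableOn_Icc).mono_set Ioo_subset_Icc_self).bdd_mul
    ((measurable_deriv a).pow_const 2).aestronglyMeasurable
    (ae_restrict_of_forall_mem measurableSet_Ioo fun r hr => ?_) (c := (K : ℝ) ^ 2)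
  have := norm_deriv_le_of_lipschitzOn (Icc_mem_nhds hr.1 hr.2) ha
  rw [norm_pow]
  exact pow_le_pow_left₀ (norm_nonneg _) this 2

lemma integral_rayleigh_three_eq {K : NNReal} (hR : 0 ≤ R)
    (ha : LipschitzOnWith K a (Icc 0 R)) (hh : ContinuousOn h (Icc 0 R)) (lam : ℝ) :
    ∫ r in (0:ℝ)..R, deriv a r ^ 2 * h r ^ 2 + lam * a r ^ 2 =
      (∫ r in (0:ℝ)..R, deriv a r ^ 2 * h r ^ 2) + lam * ∫ r in (0:ℝ)..R, a r ^ 2 := by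
  have hA : IntervalIntegrable (fun r => a r ^ 2) volume 0 R :=
    (ha.continuousOn.pow 2).intervalIntegrable_of_Icc hR
  rw [intervalIntegral.integral_add (intervalIntegrable_deriv_sq_mul_sq hR ha hh)
    (hA.const_mul lam), intervalIntegral.integral_const_mul]

end Rayleigh

section Monotone

variable {R lam lam' : ℝ} {h a : ℝ → ℝ}

lemma rayleighQ_three_le_mul {K : NNReal} (hR : 0 ≤ R) (ha : LipschitzOnWith K a (Icc 0 R))
    (hh : ContinuousOn h (Icc 0 R)) (hlam : 0 < lam) (hlam' : lam ≤ lam') :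
    rayleighQ R 3 lam' h a ≤ lam' / lam * rayleighQ R 3 lam h a := by
  simp only [rayleighQ_three, integral_rayleigh_three_eq hR ha hh, mul_div_assoc']
  refine div_le_div_of_nonneg_right ?_ (by positivity)
  have hE : 0 ≤ ∫ r in (0:ℝ)..R, deriv a r ^ 2 * h r ^ 2 :=
    intervalIntegral.integral_nonneg hR fun _ _ => by positivity
  have hratio : 1 ≤ lam' / lam := (one_le_div hlam).2 hlam'
  rw [mul_add, ← mul_assoc, div_mul_cancel₀ _ hlam.ne']
  nlinarith

lemma steklovAt_three_le_mul (hR : 0 < R) (hh : ContinuousOn h (Icc 0 R)) (hlam : 0 < lam)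
    (hlam' : lam ≤ lam') : steklovAt R 3 lam' h ≤ lam' / lam * steklovAt R 3 lam h := by
  have hc : 0 < lam' / lam := div_pos (hlam.trans_le hlam') hlam
  rw [← div_le_iff₀' hc]
  refine le_csInf ⟨_, _, isAdmissible_sub hR, rfl⟩ ?_
  rintro _ ⟨a, ha, rfl⟩
  obtain ⟨K, hK⟩ := ha.1
  rw [div_le_iff₀' hc]
  exact (steklovAt_three_le_rayleighQ hR.le (hlam.le.trans hlam') ha).trans
    (rayleighQ_three_le_mul hR.le hK hh hlam hlam')

end Monotone

lemma LipschitzOnWith.abs_le_mul_sub {a b r : ℝ} {K : NNReal} {h : ℝ → ℝ}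
    (hh : LipschitzOnWith K h (Icc a b)) (hb : h b = 0) (hr : r ∈ Icc a b) :
    |h r| ≤ K * (b - r) := by
  have := hh.dist_le_mul r hr b (right_mem_Icc.2 (hr.1.trans hr.2))
  rwa [Real.dist_eq, Real.dist_eq, hb, sub_zero, abs_sub_comm,
    abs_of_nonneg (sub_nonneg.2 hr.2)] at this

noncomputable def testProfile (R e d r : ℝ) : ℝ := min (1 - e / R * r) ((R - r) / d)

section TestProfile

variable {R e d : ℝ}

lemma lipschitzWith_testProfile (hR : 0 < R) (he : 0 ≤ e) (he1 : e ≤ 1) (hd : 0 < d)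
    (hdR : d ≤ R) : LipschitzWith (1 / d).toNNReal (testProfile R e d) := by
  refine LipschitzWith.of_dist_le_mul fun x y => ?_
  rw [Real.coe_toNNReal _ (by positivity), Real.dist_eq, Real.dist_eq]
  have hslope : e / R ≤ 1 / d := by
    rw [div_le_div_iff₀ hR hd]
    nlinarith
  refine (abs_min_sub_min_le_max _ _ _ _).trans (max_le ?_ ?_)
  · calc |1 - e / R * x - (1 - e / R * y)| = e / R * |x - y| := by
          rw [show 1 - e / R * x - (1 - e / R * y) = -(e / R * (x - y)) by ring, abs_neg,
            abs_mul, abs_of_nonneg (by positivity : 0 ≤ e / R)]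
      _ ≤ 1 / d * |x - y| := by gcongr
  · rw [show (R - x) / d - (R - y) / d = -(1 / d * (x - y)) by ring, abs_neg, abs_mul,
      abs_of_pos (by positivity : 0 < 1 / d)]

lemma testProfile_zero (hd : 0 < d) (hdR : d ≤ R) : testProfile R e d 0 = 1 := by
  simpa [testProfile] using (one_le_div hd).2 hdR

lemma isAdmissible_testProfile (hR : 0 < R) (he : 0 ≤ e) (he1 : e ≤ 1) (hd : 0 < d)
    (hdR : d ≤ R) : IsAdmissible R (testProfile R e d) := by
  refine ⟨⟨_, (lipschitzWith_testProfile hR he he1 hd hdR).lipschitzOnWith⟩, ?_, ?_⟩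
  · simp [testProfile, div_mul_cancel₀ _ hR.ne', he1]
  · simp [testProfile_zero hd hdR]

lemma testProfile_sq_le (hR : 0 < R) (he : 0 ≤ e) (he1 : e ≤ 1) (hd : 0 < d) {r : ℝ}
    (hr : r ∈ Icc 0 R) : testProfile R e d r ^ 2 ≤ 1 - e / R * r := by
  have hle : testProfile R e d r ≤ 1 - e / R * r := min_le_left _ _
  have hslope : 0 ≤ e / R * r := by have := hr.1; positivity
  have hnonneg : 0 ≤ testProfile R e d r := by
    refine le_min ?_ (div_nonneg (sub_nonneg.2 hr.2) hd.le)
    have : e / R * r ≤ e / R * R := by gcongr; exact hr.2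
    rw [div_mul_cancel₀ _ hR.ne'] at this
    linarith
  nlinarith

lemma integral_testProfile_sq_le (hR : 0 < R) (he : 0 ≤ e) (he1 : e ≤ 1) (hd : 0 < d)
    (hdR : d ≤ R) : ∫ r in (0:ℝ)..R, testProfile R e d r ^ 2 ≤ R * (1 - e / 2) := by
  calc ∫ r in (0:ℝ)..R, testProfile R e d r ^ 2 ≤ ∫ r in (0:ℝ)..R, (1 - e / R * r) :=
        intervalIntegral.integral_mono_on hR.le
          (((lipschitzWith_testProfile hR he he1 hd hdR).continuous.pow 2).intervalIntegrable _ _)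
          ((by fun_prop : Continuous fun r : ℝ => 1 - e / R * r).intervalIntegrable _ _)
          fun r hr => testProfile_sq_le hR he he1 hd hr
    _ = R * (1 - e / 2) := by
        rw [intervalIntegral.integral_sub intervalIntegrable_const
          (intervalIntegral.intervalIntegrable_id.const_mul _), intervalIntegral.integral_const_mul,
          intervalIntegral.integral_const, integral_id, smul_eq_mul]
        field_simp
        ring

lemma deriv_testProfile (hR : 0 < R) (he : 0 ≤ e) (hd : 0 < d) {r : ℝ}
    (hr : r ∈ Ioo 0 (R - d)) : deriv (testProfile R e d) r = -(e / R) := by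
  have hloc : testProfile R e d =ᶠ[nhds r] fun x => 1 - e / R * x := by
    filter_upwards [isOpen_Ioo.mem_nhds hr] with x hx
    refine min_eq_left ?_
    have h1 : 0 ≤ e / R * x := by have := hx.1; positivity
    have h2 : 1 < (R - x) / d := by rw [one_lt_div hd]; linarith [hx.2]
    linarith
  rw [hloc.deriv_eq]
  simp

lemma integral_deriv_testProfile_sq_mul_le {h : ℝ → ℝ} {K : NNReal}
    (hh : LipschitzOnWith K h (Icc 0 R)) (hhR : h R = 0) (hR : 0 < R) (he : 0 ≤ e)
    (he1 : e ≤ 1) (hd : 0 < d) (hdR : d ≤ R) :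
    ∫ r in (0:ℝ)..R, deriv (testProfile R e d) r ^ 2 * h r ^ 2 ≤ K ^ 2 * (e ^ 2 * R + d) := by
  set F := fun r => deriv (testProfile R e d) r ^ 2 * h r ^ 2
  have hF : ∀ r, F r = |deriv (testProfile R e d) r * h r| ^ 2 := fun r => by
    rw [sq_abs, mul_pow]
  have hFint : IntervalIntegrable F volume 0 R := intervalIntegrable_deriv_sq_mul_sq hR.le
    (lipschitzWith_testProfile hR he he1 hd hdR).lipschitzOnWith hh.continuousOn
  have hsub : uIcc 0 (R - d) ⊆ uIcc 0 R ∧ uIcc (R - d) R ⊆ uIcc 0 R := by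
    simp only [uIcc_of_le hR.le, uIcc_of_le (sub_nonneg.2 hdR),
      uIcc_of_le (by linarith : R - d ≤ R)]
    exact ⟨Icc_subset_Icc le_rfl (by linarith), Icc_subset_Icc (by linarith) le_rfl⟩
  have hslow : ∫ r in (0:ℝ)..(R - d), F r ≤ ∫ r in (0:ℝ)..(R - d), ((e * K) ^ 2 : ℝ) := by
    refine intervalIntegral.integral_mono_on_of_le_Ioo (sub_nonneg.2 hdR)
      (hFint.mono_set hsub.1) intervalIntegrable_const fun r hr => ?_
    rw [hF, deriv_testProfile hR he hd hr]
    refine pow_le_pow_left₀ (abs_nonneg _) ?_ 2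
    have hhr := hh.abs_le_mul_sub hhR ⟨hr.1.le, by linarith [hr.2]⟩
    calc |-(e / R) * h r| = e / R * |h r| := by
          rw [abs_mul, abs_neg, abs_of_nonneg (by positivity : 0 ≤ e / R)]
      _ ≤ e / R * (K * R) := by gcongr; nlinarith [hr.1, K.2]
      _ = e * K := by field_simp
  have hsteep : ∫ r in (R - d)..R, F r ≤ ∫ r in (R - d)..R, ((K : ℝ) ^ 2) := by
    refine intervalIntegral.integral_mono_on_of_le_Ioo (by linarith)
      (hFint.mono_set hsub.2) intervalIntegrable_const fun r hr => ?_
    rw [hF]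
    refine pow_le_pow_left₀ (abs_nonneg _) ?_ 2
    have hder :=
      norm_deriv_le_of_lipschitz (x₀ := r) (lipschitzWith_testProfile hR he he1 hd hdR)
    rw [Real.norm_eq_abs, Real.coe_toNNReal _ (by positivity)] at hder
    have hhr := hh.abs_le_mul_sub hhR ⟨by linarith [hr.1], hr.2.le⟩
    calc |deriv (testProfile R e d) r * h r| ≤ 1 / d * (K * d) := by
          rw [abs_mul]
          gcongr
          nlinarith [hr.1, K.2]
      _ = K := by field_simp
  rw [← intervalIntegral.integral_add_adjacent_intervals (hFint.mono_set hsub.1)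
    (hFint.mono_set hsub.2)]
  simp only [intervalIntegral.integral_const, smul_eq_mul] at hslow hsteep
  nlinarith [K.2, sq_nonneg (e * K)]

end TestProfile

section Gap

variable {R lam lam' : ℝ} {h : ℝ → ℝ} {K : NNReal}

lemma steklovAt_three_lt (hR : 0 < R) (hh : LipschitzOnWith K h (Icc 0 R)) (hhR : h R = 0)
    (h0 : h 0 ≠ 0) (hlam : 0 < lam) : steklovAt R 3 lam h < lam * R / h 0 ^ 2 := by
  -- `4 K² e ≤ lam` keeps the energy `(3/2) K² e² R` below the gain `lam e R / 2`.
  set e := lam / (lam + 4 * K ^ 2)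
  have he : 0 < e := by positivity
  have he1 : e ≤ 1 := (div_le_one (by positivity)).2 (by nlinarith [sq_nonneg (K : ℝ)])
  have heK : 4 * K ^ 2 * e ≤ lam := by
    have : e * (lam + 4 * K ^ 2) = lam := div_mul_cancel₀ _ (by positivity)
    nlinarith
  set d := e ^ 2 * R / 2 with hd_def
  have hd : 0 < d := by positivity
  have hdR : d ≤ R := by nlinarith [pow_le_one₀ he.le he1 (n := 2)]
  have hE := integral_deriv_testProfile_sq_mul_le hh hhR hR he.le he1 hd hdR
  have hA := integral_testProfile_sq_le hR he.le he1 hd hdR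
  calc steklovAt R 3 lam h
      ≤ rayleighQ R 3 lam h (testProfile R e d) :=
        steklovAt_three_le_rayleighQ hR.le hlam.le (isAdmissible_testProfile hR he.le he1 hd hdR)
    _ = ((∫ r in (0:ℝ)..R, deriv (testProfile R e d) r ^ 2 * h r ^ 2)
          + lam * ∫ r in (0:ℝ)..R, testProfile R e d r ^ 2) / h 0 ^ 2 := by
        rw [rayleighQ_three, integral_rayleigh_three_eq hR.le
          (lipschitzWith_testProfile hR he.le he1 hd hdR).lipschitzOnWith hh.continuousOn,
          testProfile_zero hd hdR, one_pow, one_mul]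
    _ < lam * R / h 0 ^ 2 := by
        gcongr
        nlinarith [hd_def, mul_le_mul_of_nonneg_left hA hlam.le, mul_pos (mul_pos hlam he) hR,
          mul_le_mul_of_nonneg_right heK (by positivity : 0 ≤ e * R)]

lemma steklovAt_three_sub_lt (hR : 0 < R) (hh : LipschitzOnWith K h (Icc 0 R)) (hhR : h R = 0)
    (h0 : h 0 ≠ 0) (hlam : 0 ≤ lam) (hlam' : lam < lam') :
    steklovAt R 3 lam' h - steklovAt R 3 lam h < R * (lam' - lam) / h 0 ^ 2 := by
  rcases hlam.eq_or_lt with rfl | hpos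
  · have hσ' := steklovAt_three_lt hR hh hhR h0 hlam'
    have hσ := steklovAt_three_nonneg (h := h) hR.le le_rfl
    rw [sub_zero, mul_comm]
    linarith
  have hσ := steklovAt_three_lt hR hh hhR h0 hpos
  have hmul := steklovAt_three_le_mul hR hh.continuousOn hpos hlam'.le
  calc steklovAt R 3 lam' h - steklovAt R 3 lam h
      ≤ (lam' - lam) / lam * steklovAt R 3 lam h := by
        rw [sub_div, div_self hpos.ne', sub_mul, one_mul]
        linarith
    _ < (lam' - lam) / lam * (lam * R / h 0 ^ 2) := by gcongr
    _ = R * (lam' - lam) / h 0 ^ 2 := by field_simp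

end Gap

theorem stmt_6 (R : ℝ) (hR : 0 < R) (h : ℝ → ℝ) (hH : SatisfiesH R h) (k : ℕ) :
    steklov R 3 (k + 1) h - steklov R 3 k h <
      R * (sphereEig 3 (k + 1) - sphereEig 3 k) / (h 0) ^ 2 := by
  obtain ⟨hsmooth, hpos, hhR, -⟩ := hH
  obtain ⟨K, hK⟩ := hsmooth.exists_lipschitzOnWith (by simp) (convex_Icc 0 R) isCompact_Icc
  have hnonneg : 0 ≤ sphereEig 3 k := by rw [sphereEig_three]; positivity
  have hlt : sphereEig 3 k < sphereEig 3 (k + 1) := by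
    simp only [sphereEig_three]
    push_cast
    nlinarith
  exact steklovAt_three_sub_lt hR hK hhR (hpos 0 ⟨le_rfl, hR⟩).ne' hnonneg hlt
end

section
/- Let n ≥ 4 be an integer, let h satisfy hypotheses (H), and suppose h(r) ≤ C2 for all 0 ≤ r ≤ R, where C2 > 0. Then for every integer k ≥ 1, the Steklov spectral gap satisfies σ_(k+1)(g_h) − σ_(k)(g_h) ≤ (λ_(k+1) − λ_(k)) C2^{n−3} R / h(0)^{n−1}. -/
open MeasureTheory Set

/-!
Truncating an admissible test function `a` at height `|a 0|` keeps its value at `0`, increases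
neither `|a|` nor `|a'|`, and bounds `a²` by `a(0)²`. Hence replacing `λ_(k)` by `λ_(k+1)` in
the Rayleigh quotient of the truncation costs at most `(λ_(k+1) - λ_(k)) a(0)² C2^{n-3} R` in the
numerator, and dividing by `a(0)² h(0)^{n-1}` and taking infima gives the bound on the gap.
-/

open Filter Topology
open scoped NNReal

noncomputable def clamp (c x : ℝ) : ℝ := max (-c) (min x c)

lemma lipschitzWith_clamp (c : ℝ) : LipschitzWith 1 (clamp c) :=
  (LipschitzWith.id.min_const c).const_max (-c)

lemma clamp_of_abs_le {c x : ℝ} (hx : |x| ≤ c) : clamp c x = x := by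
  rw [abs_le] at hx
  rw [clamp, min_eq_left hx.2, max_eq_right hx.1]

lemma abs_clamp_le {c : ℝ} (hc : 0 ≤ c) (x : ℝ) : |clamp c x| ≤ c :=
  abs_le.2 ⟨le_max_left _ _, max_le (by linarith) (min_le_right _ _)⟩

lemma abs_clamp_le_abs {c : ℝ} (hc : 0 ≤ c) (x : ℝ) : |clamp c x| ≤ |x| := by
  rcases le_total |x| c with hx | hx
  · rw [clamp_of_abs_le hx]
  · exact (abs_clamp_le hc x).trans hx

lemma LipschitzWith.abs_deriv_comp_le {φ g : ℝ → ℝ} {K : ℝ≥0} (hφ : LipschitzWith K φ)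
    {r : ℝ} (hg : DifferentiableAt ℝ g r) : |deriv (φ ∘ g) r| ≤ K * |deriv g r| := by
  by_cases hφg : DifferentiableAt ℝ (φ ∘ g) r
  · refine le_of_tendsto_of_tendsto' (hasDerivAt_iff_tendsto_slope.1 hφg.hasDerivAt).abs
      ((hasDerivAt_iff_tendsto_slope.1 hg.hasDerivAt).abs.const_mul (K : ℝ)) fun x => ?_
    simp only [slope_def_field, abs_div, Function.comp_apply, mul_div_assoc']
    gcongr
    simpa [Real.dist_eq] using hφ.dist_le_mul (g x) (g r)
  · rw [deriv_zero_of_not_differentiableAt hφg, abs_zero]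
    positivity

noncomputable def rayleighIntegrand (n : ℕ) (lam : ℝ) (h a : ℝ → ℝ) (r : ℝ) : ℝ :=
  deriv a r ^ 2 * h r ^ ((n : ℤ) - 1) + lam * a r ^ 2 * h r ^ ((n : ℤ) - 3)

section Rayleigh

variable {R : ℝ} {n : ℕ} {lam lam' : ℝ} {h a : ℝ → ℝ}

lemma rayleighQ_eq_integral_div :
    rayleighQ R n lam h a =
      (∫ r in (0 : ℝ)..R, rayleighIntegrand n lam h a r) / (a 0 ^ 2 * h 0 ^ ((n : ℤ) - 1)) :=
  rfl

lemma rayleighQ_congr (hR : 0 ≤ R) {b : ℝ → ℝ} (hab : EqOn a b (Icc 0 R)) :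
    rayleighQ R n lam h a = rayleighQ R n lam h b := by
  have hderiv : ∀ r ∈ Ioo 0 R, deriv a r = deriv b r := fun r hr =>
    (hab.eventuallyEq_of_mem (Icc_mem_nhds hr.1 hr.2)).deriv_eq
  rw [rayleighQ, rayleighQ, hab (left_mem_Icc.2 hR)]
  congr 1
  refine intervalIntegral.integral_congr_ae ?_
  filter_upwards [volume.ae_ne R] with r hrR hr
  rw [uIoc_of_le hR] at hr
  rw [hderiv r ⟨hr.1, lt_of_le_of_ne hr.2 hrR⟩, hab (Ioc_subset_Icc_self hr)]

lemma rayleighQ_nonneg (hR : 0 ≤ R) (hh : ∀ r ∈ Icc 0 R, 0 ≤ h r) (hlam : 0 ≤ lam)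
    (a : ℝ → ℝ) : 0 ≤ rayleighQ R n lam h a := by
  have hh0 := hh 0 (left_mem_Icc.2 hR)
  refine div_nonneg (intervalIntegral.integral_nonneg hR fun r hr => ?_) (by positivity)
  have := hh r hr
  positivity

lemma LipschitzWith.intervalIntegrable_rayleighIntegrand {K : ℝ≥0} (ha : LipschitzWith K a)
    (hn : 3 ≤ n) (hh : ContinuousOn h (uIcc 0 R)) :
    IntervalIntegrable (rayleighIntegrand n lam h a) volume 0 R := by
  have hderiv : IntervalIntegrable (fun r => deriv a r ^ 2) volume 0 R :=
    (intervalIntegrable_const (c := (K : ℝ) ^ 2)).mono_fun'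
      ((measurable_deriv a).pow_const 2).aestronglyMeasurable
      (ae_of_all _ fun r => by
        simpa using pow_le_pow_left₀ (abs_nonneg _) (norm_deriv_le_of_lipschitz ha) 2)
  have hpow : ∀ m : ℤ, 0 ≤ m → ContinuousOn (fun r => h r ^ m) (uIcc 0 R) :=
    fun m hm => hh.zpow₀ m fun _ _ => Or.inr hm
  exact (hderiv.mul_continuousOn (hpow _ (by omega))).add
    ((continuousOn_const.mul (ha.continuous.continuousOn.pow 2)).mul
      (hpow _ (by omega))).intervalIntegrable

lemma rayleighIntegrand_clamp_comp_le (hn : 3 ≤ n) {c C : ℝ} (hc : 0 ≤ c) (hlam : 0 ≤ lam)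
    (hll : lam ≤ lam') {r : ℝ} (ha : DifferentiableAt ℝ a r) (hh : 0 ≤ h r) (hC : h r ≤ C) :
    rayleighIntegrand n lam' h (clamp c ∘ a) r ≤
      rayleighIntegrand n lam h a r + (lam' - lam) * c ^ 2 * C ^ ((n : ℤ) - 3) := by
  have hd : deriv (clamp c ∘ a) r ^ 2 ≤ deriv a r ^ 2 :=
    sq_le_sq.2 (by simpa using (lipschitzWith_clamp c).abs_deriv_comp_le ha)
  have hv : clamp c (a r) ^ 2 ≤ a r ^ 2 := sq_le_sq.2 (abs_clamp_le_abs hc _)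
  have hvc : clamp c (a r) ^ 2 ≤ c ^ 2 :=
    sq_le_sq.2 ((abs_clamp_le hc _).trans_eq (abs_of_nonneg hc).symm)
  have hq : h r ^ ((n : ℤ) - 3) ≤ C ^ ((n : ℤ) - 3) := zpow_le_zpow_left₀ (by omega) hh hC
  calc rayleighIntegrand n lam' h (clamp c ∘ a) r
      = deriv (clamp c ∘ a) r ^ 2 * h r ^ ((n : ℤ) - 1)
          + lam * (clamp c (a r) ^ 2 * h r ^ ((n : ℤ) - 3))
          + (lam' - lam) * (clamp c (a r) ^ 2 * h r ^ ((n : ℤ) - 3)) := by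
        simp only [rayleighIntegrand, Function.comp_apply]; ring
    _ ≤ deriv a r ^ 2 * h r ^ ((n : ℤ) - 1) + lam * (a r ^ 2 * h r ^ ((n : ℤ) - 3))
          + (lam' - lam) * (c ^ 2 * C ^ ((n : ℤ) - 3)) := by
        have := sub_nonneg.2 hll
        gcongr
    _ = rayleighIntegrand n lam h a r + (lam' - lam) * c ^ 2 * C ^ ((n : ℤ) - 3) := by
        simp only [rayleighIntegrand]; ring

lemma rayleighQ_clamp_comp_le (hR : 0 ≤ R) (hn : 3 ≤ n) {C : ℝ}
    (hh : ContinuousOn h (Icc 0 R)) (hh0 : ∀ r ∈ Icc 0 R, 0 ≤ h r) (hC : ∀ r ∈ Icc 0 R, h r ≤ C)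
    (hlam : 0 ≤ lam) (hll : lam ≤ lam') {K : ℝ≥0} (ha : LipschitzWith K a) (ha0 : a 0 ≠ 0) :
    rayleighQ R n lam' h (clamp |a 0| ∘ a) ≤
      rayleighQ R n lam h a + (lam' - lam) * C ^ ((n : ℤ) - 3) * R / h 0 ^ ((n : ℤ) - 1) := by
  set c := |a 0|
  set E := (lam' - lam) * c ^ 2 * C ^ ((n : ℤ) - 3)
  have hc : 0 ≤ c := abs_nonneg _
  have hh' : ContinuousOn h (uIcc 0 R) := by rwa [uIcc_of_le hR]
  have hIa := ha.intervalIntegrable_rayleighIntegrand (lam := lam) hn hh'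
  have hIb := ((lipschitzWith_clamp c).comp ha).intervalIntegrable_rayleighIntegrand
    (lam := lam') hn hh'
  have hint : ∫ r in (0 : ℝ)..R, rayleighIntegrand n lam' h (clamp c ∘ a) r ≤
      (∫ r in (0 : ℝ)..R, rayleighIntegrand n lam h a r) + E * R :=
    calc ∫ r in (0 : ℝ)..R, rayleighIntegrand n lam' h (clamp c ∘ a) r
        ≤ ∫ r in (0 : ℝ)..R, rayleighIntegrand n lam h a r + E := by
          refine intervalIntegral.integral_mono_ae_restrict hR hIb
            (hIa.add intervalIntegrable_const) ?_
          filter_upwards [ae_restrict_mem measurableSet_Icc,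
            ae_restrict_of_ae ha.ae_differentiableAt] with r hr hda
          exact rayleighIntegrand_clamp_comp_le hn hc hlam hll hda (hh0 r hr) (hC r hr)
      _ = (∫ r in (0 : ℝ)..R, rayleighIntegrand n lam h a r) + E * R := by
          rw [intervalIntegral.integral_add hIa intervalIntegrable_const,
            intervalIntegral.integral_const, smul_eq_mul, sub_zero, mul_comm R]
  have hD : 0 ≤ a 0 ^ 2 * h 0 ^ ((n : ℤ) - 1) := by
    have := hh0 0 (left_mem_Icc.2 hR)
    positivity
  calc rayleighQ R n lam' h (clamp c ∘ a)
      = (∫ r in (0 : ℝ)..R, rayleighIntegrand n lam' h (clamp c ∘ a) r) /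
          (a 0 ^ 2 * h 0 ^ ((n : ℤ) - 1)) := by
        rw [rayleighQ_eq_integral_div, Function.comp_apply, clamp_of_abs_le le_rfl]
    _ ≤ ((∫ r in (0 : ℝ)..R, rayleighIntegrand n lam h a r) + E * R) /
          (a 0 ^ 2 * h 0 ^ ((n : ℤ) - 1)) := div_le_div_of_nonneg_right hint hD
    _ = rayleighQ R n lam h a + (lam' - lam) * C ^ ((n : ℤ) - 3) * R / h 0 ^ ((n : ℤ) - 1) := by
        rw [add_div, ← rayleighQ_eq_integral_div,
          show E * R = a 0 ^ 2 * ((lam' - lam) * C ^ ((n : ℤ) - 3) * R) by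
            simp only [E, c, sq_abs]; ring,
          mul_div_mul_left _ _ (pow_ne_zero 2 ha0)]

lemma isAdmissible_clamp_comp {K : ℝ≥0} (ha : LipschitzWith K a) (haR : a R = 0)
    (ha0 : a 0 ≠ 0) : IsAdmissible R (clamp |a 0| ∘ a) := by
  refine ⟨⟨K, by simpa using ((lipschitzWith_clamp _).comp ha).lipschitzOnWith⟩, ?_, ?_⟩
  · rw [Function.comp_apply, haR, clamp_of_abs_le (by simp)]
  · rwa [Function.comp_apply, clamp_of_abs_le le_rfl]

lemma isAdmissible_const_sub (hR : R ≠ 0) : IsAdmissible R (fun r => R - r) :=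
  ⟨⟨1, (IsometryEquiv.subLeft R).isometry.lipschitz.lipschitzOnWith⟩, sub_self R,
    by simpa using hR⟩

lemma IsAdmissible.exists_rayleighQ_le (hR : 0 ≤ R) (hn : 3 ≤ n) {C : ℝ}
    (hh : ContinuousOn h (Icc 0 R)) (hh0 : ∀ r ∈ Icc 0 R, 0 ≤ h r) (hC : ∀ r ∈ Icc 0 R, h r ≤ C)
    (hlam : 0 ≤ lam) (hll : lam ≤ lam') (ha : IsAdmissible R a) :
    ∃ b, IsAdmissible R b ∧ rayleighQ R n lam' h b ≤
      rayleighQ R n lam h a + (lam' - lam) * C ^ ((n : ℤ) - 3) * R / h 0 ^ ((n : ℤ) - 1) := by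
  obtain ⟨⟨K, hK⟩, haR, ha0⟩ := ha
  obtain ⟨g, hg, hag⟩ := hK.extend_real
  have hgR : g R = 0 := (hag (right_mem_Icc.2 hR)).symm.trans haR
  have hg0 : g 0 ≠ 0 := (hag (left_mem_Icc.2 hR)) ▸ ha0
  refine ⟨clamp |g 0| ∘ g, isAdmissible_clamp_comp hg hgR hg0, ?_⟩
  rw [rayleighQ_congr hR hag]
  exact rayleighQ_clamp_comp_le hR hn hh hh0 hC hlam hll hg hg0

end Rayleigh

lemma sphereEig_mono {n : ℕ} (hn : 1 ≤ n) : Monotone (sphereEig n) :=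
  monotone_nat_of_le_succ fun k => by
    have : (1 : ℝ) ≤ n := by exact_mod_cast hn
    simp only [sphereEig]
    push_cast
    nlinarith

lemma sphereEig_nonneg {n : ℕ} (hn : 1 ≤ n) (k : ℕ) : 0 ≤ sphereEig n k := by
  simpa [sphereEig] using sphereEig_mono hn k.zero_le

lemma Real.sInf_le_sInf_add {S T : Set ℝ} (hT : BddBelow T) (hS : S.Nonempty) {d : ℝ}
    (hST : ∀ s ∈ S, ∃ t ∈ T, t ≤ s + d) : sInf T ≤ sInf S + d := by
  suffices sInf T - d ≤ sInf S by linarith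
  refine le_csInf hS fun s hs => ?_
  obtain ⟨t, ht, hts⟩ := hST s hs
  linarith [csInf_le hT ht]

lemma steklov_le_steklov_add {R : ℝ} (hR : 0 < R) {n : ℕ} (hn : 3 ≤ n) {h : ℝ → ℝ} {C : ℝ}
    (hh : ContinuousOn h (Icc 0 R)) (hh0 : ∀ r ∈ Icc 0 R, 0 ≤ h r) (hC : ∀ r ∈ Icc 0 R, h r ≤ C)
    {k l : ℕ} (hkl : k ≤ l) :
    steklov R n l h ≤ steklov R n k h +
      (sphereEig n l - sphereEig n k) * C ^ ((n : ℤ) - 3) * R / h 0 ^ ((n : ℤ) - 1) := by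
  have hlam := sphereEig_nonneg (n := n) (by omega) k
  have hll := sphereEig_mono (n := n) (by omega) hkl
  unfold steklov
  refine Real.sInf_le_sInf_add ⟨0, ?_⟩ ?_ ?_
  · rintro _ ⟨a, -, rfl⟩
    exact rayleighQ_nonneg hR.le hh0 (hlam.trans hll) a
  · exact ⟨_, _, isAdmissible_const_sub hR.ne', rfl⟩
  · rintro _ ⟨a, ha, rfl⟩
    obtain ⟨b, hb, hle⟩ := ha.exists_rayleighQ_le hR.le hn hh hh0 hC hlam hll
    exact ⟨_, ⟨b, hb, rfl⟩, hle⟩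

lemma SatisfiesH.nonneg {R : ℝ} {h : ℝ → ℝ} (hH : SatisfiesH R h) : ∀ r ∈ Icc 0 R, 0 ≤ h r := by
  rintro r ⟨hr0, hrR⟩
  rcases hrR.lt_or_eq with hrR | rfl
  · exact (hH.2.1 r ⟨hr0, hrR⟩).le
  · exact hH.2.2.1.ge

theorem stmt_8_general (n : ℕ) (hn : 4 ≤ n) (R : ℝ) (hR : 0 < R) (h : ℝ → ℝ)
    (hH : SatisfiesH R h) (C2 : ℝ)
    (hub : ∀ r ∈ Set.Icc (0:ℝ) R, h r ≤ C2) :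
    ∀ k : ℕ, 1 ≤ k →
      steklov R n (k + 1) h - steklov R n k h ≤
        (sphereEig n (k + 1) - sphereEig n k) * C2 ^ (n - 3) * R / (h 0) ^ (n - 1) := by
  intro k _
  have key := steklov_le_steklov_add (n := n) hR (by omega) hH.1.continuousOn hH.nonneg hub
    k.le_succ
  rw [show (n : ℤ) - 3 = ((n - 3 : ℕ) : ℤ) by omega, show (n : ℤ) - 1 = ((n - 1 : ℕ) : ℤ) by omega,
    zpow_natCast, zpow_natCast] at key
  linarith

theorem stmt_8 (n : ℕ) (hn : 4 ≤ n) (R : ℝ) (hR : 0 < R) (h : ℝ → ℝ)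
    (hH : SatisfiesH R h) (C2 : ℝ) (hC2 : 0 < C2)
    (hub : ∀ r ∈ Set.Icc (0:ℝ) R, h r ≤ C2) :
    ∀ k : ℕ, 1 ≤ k →
      steklov R n (k + 1) h - steklov R n k h ≤
        (sphereEig n (k + 1) - sphereEig n k) * C2 ^ (n - 3) * R / (h 0) ^ (n - 1) :=
  stmt_8_general n hn R hR h hH C2 hub
end
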